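/- Let T° : ℝ^d → ℝ^d be Lipschitz continuous with T°(q + c) = T°(q) + c for all q and c, and suppose the fixed points of T° are exactly the constant vectors { c·𝟙 : c ∈ ℝ }. Let f∞ : ℝ^d → ℝ be Lipschitz continuous with f∞(0) = 0, such that for every x ∈ ℝ^d the map c ↦ f∞(x + c) is nondecreasing, and such that c ↦ f∞(c·𝟙) is strictly increasing and maps ℝ onto ℝ. Let ᾱ > 0. Assume that for every x₀ ∈ ℝ^d there exists a differentiable y : ℝ → ℝ^d with y(0) = x₀ and ẏ(t) = T°(y(t)) − y(t) for all t, such that y(t) converges as t → ∞ to some constant vector ĉ·𝟙, and such that for every c ∈ ℝ the map t ↦ ‖y(t) − c·𝟙‖∞ is nonincreasing on [0, ∞). Then for the ODE ẋ = T°(x) − x − ᾱ·f∞(x): every differentiable solution x : ℝ → ℝ^d converges to the origin as t → ∞, and the origin is Lyapunov stable, i.e., for every ε > 0 there exists δ > 0 such that every solution with ‖x(0)‖∞ ≤ δ satisfies ‖x(t)‖∞ ≤ ε for all t ≥ 0. -/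

import Mathlib

open Set Filter

lemma mvt_grow {c g : ℝ → ℝ} (hc : ∀ t, HasDerivAt c (g t) t) {a b m : ℝ} (hab : a ≤ b)
    (h : ∀ t, a ≤ t → t ≤ b → m ≤ g t) : c a + m * (b - a) ≤ c b := by
  rcases eq_or_lt_of_le hab with rfl | hlt
  · simp
  · obtain ⟨ξ, hξ, hsl⟩ := exists_hasDerivAt_eq_slope c g hlt
      (fun t _ => (hc t).continuousAt.continuousWithinAt) (fun t _ => hc t)
    have hm : m ≤ (c b - c a) / (b - a) := hsl ▸ h ξ hξ.1.le hξ.2.le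
    have := (le_div_iff₀ (by linarith)).mp hm
    linarith

lemma mvt_decay {c g : ℝ → ℝ} (hc : ∀ t, HasDerivAt c (g t) t) {a b m : ℝ} (hab : a ≤ b)
    (h : ∀ t, a ≤ t → t ≤ b → g t ≤ -m) : c b ≤ c a - m * (b - a) := by
  rcases eq_or_lt_of_le hab with rfl | hlt
  · simp
  · obtain ⟨ξ, hξ, hsl⟩ := exists_hasDerivAt_eq_slope c g hlt
      (fun t _ => (hc t).continuousAt.continuousWithinAt) (fun t _ => hc t)
    have hm : (c b - c a) / (b - a) ≤ -m := hsl ▸ h ξ hξ.1.le hξ.2.le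
    have := (div_le_iff₀ (by linarith)).mp hm
    linarith

lemma barrier_le {c g : ℝ → ℝ} (hc : ∀ t, HasDerivAt c (g t) t) {a β : ℝ}
    (h : ∀ t, a ≤ t → β ≤ c t → g t ≤ 0) (ha : c a ≤ β) :
    ∀ t, a ≤ t → c t ≤ β := by
  intro b hab
  by_contra hcb
  push_neg at hcb
  have hcont : Continuous c := by
    have : Differentiable ℝ c := fun t => (hc t).differentiableAt
    exact this.continuous
  have hlt : a < b := lt_of_le_of_ne hab (by rintro rfl; exact absurd ha (not_le.mpr hcb))
  have hSne : (Icc a b ∩ c ⁻¹' (Iic β)).Nonempty := ⟨a, ⟨le_refl a, hlt.le⟩, ha⟩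
  have hSb : BddAbove (Icc a b ∩ c ⁻¹' (Iic β)) := ⟨b, fun t ht => ht.1.2⟩
  have hScl : IsClosed (Icc a b ∩ c ⁻¹' (Iic β)) := isClosed_Icc.inter (isClosed_Iic.preimage hcont)
  have hsmem : sSup (Icc a b ∩ c ⁻¹' (Iic β)) ∈ Icc a b ∩ c ⁻¹' (Iic β) :=
    hScl.csSup_mem hSne hSb
  set s := sSup (Icc a b ∩ c ⁻¹' (Iic β))
  have hcs : c s ≤ β := hsmem.2
  have hsb : s < b := lt_of_le_of_ne hsmem.1.2 (by rintro h'; rw [h'] at hcs; linarith)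
  obtain ⟨ξ, hξ, hsl⟩ := exists_hasDerivAt_eq_slope c g hsb
    (fun t _ => (hc t).continuousAt.continuousWithinAt) (fun t _ => hc t)
  have hgpos : 0 < g ξ := by
    rw [hsl]
    apply div_pos (by linarith) (by linarith [hξ.2])
  have hcξ : β ≤ c ξ := by
    by_contra hb'
    push_neg at hb'
    have : ξ ∈ Icc a b ∩ c ⁻¹' (Iic β) := ⟨⟨hsmem.1.1.trans hξ.1.le, hξ.2.le⟩, hb'.le⟩
    exact absurd (le_csSup hSb this) (not_le.mpr hξ.1)
  exact absurd (h ξ (hsmem.1.1.trans hξ.1.le) hcξ) (not_le.mpr hgpos)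

lemma barrier_ge {c g : ℝ → ℝ} (hc : ∀ t, HasDerivAt c (g t) t) {a β : ℝ}
    (h : ∀ t, a ≤ t → c t ≤ β → 0 ≤ g t) (ha : β ≤ c a) :
    ∀ t, a ≤ t → β ≤ c t := by
  intro b hab
  by_contra hcb
  push_neg at hcb
  have hcont : Continuous c := by
    have : Differentiable ℝ c := fun t => (hc t).differentiableAt
    exact this.continuous
  have hlt : a < b := lt_of_le_of_ne hab (by rintro rfl; exact absurd ha (not_le.mpr hcb))
  have hSne : (Icc a b ∩ c ⁻¹' (Ici β)).Nonempty := ⟨a, ⟨le_refl a, hlt.le⟩, ha⟩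
  have hSb : BddAbove (Icc a b ∩ c ⁻¹' (Ici β)) := ⟨b, fun t ht => ht.1.2⟩
  have hScl : IsClosed (Icc a b ∩ c ⁻¹' (Ici β)) := isClosed_Icc.inter (isClosed_Ici.preimage hcont)
  have hsmem : sSup (Icc a b ∩ c ⁻¹' (Ici β)) ∈ Icc a b ∩ c ⁻¹' (Ici β) :=
    hScl.csSup_mem hSne hSb
  set s := sSup (Icc a b ∩ c ⁻¹' (Ici β))
  have hcs : β ≤ c s := hsmem.2
  have hsb : s < b := lt_of_le_of_ne hsmem.1.2 (by rintro h'; rw [h'] at hcs; linarith)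
  obtain ⟨ξ, hξ, hsl⟩ := exists_hasDerivAt_eq_slope c g hsb
    (fun t _ => (hc t).continuousAt.continuousWithinAt) (fun t _ => hc t)
  have hgneg : g ξ < 0 := by
    rw [hsl]
    apply div_neg_of_neg_of_pos (by linarith) (by linarith [hξ.2])
  have hcξ : c ξ ≤ β := by
    by_contra hb'
    push_neg at hb'
    have : ξ ∈ Icc a b ∩ c ⁻¹' (Ici β) := ⟨⟨hsmem.1.1.trans hξ.1.le, hξ.2.le⟩, hb'.le⟩
    exact absurd (le_csSup hSb this) (not_le.mpr hξ.1)
  exact absurd (h ξ (hsmem.1.1.trans hξ.1.le) hcξ) (not_le.mpr hgneg)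

lemma scalar_conv {c g : ℝ → ℝ} (hc : ∀ t, HasDerivAt c (g t) t) (chat : ℝ)
    (h : ∀ ε : ℝ, 0 < ε → ∃ m : ℝ, 0 < m ∧ ∃ T : ℝ, ∀ t, T ≤ t →
      (c t ≤ chat - ε → m ≤ g t) ∧ (chat + ε ≤ c t → g t ≤ -m)) :
    Filter.Tendsto c Filter.atTop (nhds chat) := by
  rw [Metric.tendsto_atTop]
  intro ε hε
  obtain ⟨m, hm, T, hT⟩ := h (ε / 2) (by linarith)
  have hlow : ∃ T₁, T ≤ T₁ ∧ chat - ε / 2 ≤ c T₁ := by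
    by_contra hno
    push_neg at hno
    have hA : 0 < chat - ε / 2 - c T := by linarith [hno T le_rfl]
    have hTb : T ≤ T + (chat - ε / 2 - c T + 1) / m := by
      have : 0 < (chat - ε / 2 - c T + 1) / m := div_pos (by linarith) hm
      linarith
    have hgrow := mvt_grow hc hTb (fun t h1 _ => (hT t h1).1 (hno t h1).le)
    have hmul : m * (T + (chat - ε / 2 - c T + 1) / m - T) = chat - ε / 2 - c T + 1 := by
      rw [add_sub_cancel_left]
      exact mul_div_cancel₀ _ (ne_of_gt hm)
    rw [hmul] at hgrow
    linarith [hno _ hTb]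
  have hhigh : ∃ T₂, T ≤ T₂ ∧ c T₂ ≤ chat + ε / 2 := by
    by_contra hno
    push_neg at hno
    have hA : 0 < c T - (chat + ε / 2) := by linarith [hno T le_rfl]
    have hTb : T ≤ T + (c T - (chat + ε / 2) + 1) / m := by
      have : 0 < (c T - (chat + ε / 2) + 1) / m := div_pos (by linarith) hm
      linarith
    have hgrow := mvt_decay hc hTb (fun t h1 _ => (hT t h1).2 (hno t h1).le)
    have hmul : m * (T + (c T - (chat + ε / 2) + 1) / m - T) = c T - (chat + ε / 2) + 1 := by
      rw [add_sub_cancel_left]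
      exact mul_div_cancel₀ _ (ne_of_gt hm)
    rw [hmul] at hgrow
    linarith [hno _ hTb]
  obtain ⟨T₁, hT₁, hcT₁⟩ := hlow
  obtain ⟨T₂, hT₂, hcT₂⟩ := hhigh
  have hstay₁ : ∀ t, T₁ ≤ t → chat - ε / 2 ≤ c t :=
    barrier_ge hc (fun t h1 h2 => le_of_lt (lt_of_lt_of_le hm ((hT t (hT₁.trans h1)).1 h2))) hcT₁
  have hstay₂ : ∀ t, T₂ ≤ t → c t ≤ chat + ε / 2 :=
    barrier_le hc (fun t h1 h2 => by
      have := (hT t (hT₂.trans h1)).2 h2; linarith) hcT₂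
  refine ⟨max T₁ T₂, fun t ht => ?_⟩
  have h1 := hstay₁ t ((le_max_left _ _).trans ht)
  have h2 := hstay₂ t ((le_max_right _ _).trans ht)
  rw [Real.dist_eq, abs_lt]
  constructor <;> linarith


lemma my_setup {d : ℕ}
    (To : (Fin d → ℝ) → (Fin d → ℝ))
    (hToLip : ∃ L : ℝ, ∀ q q' : Fin d → ℝ, ‖To q - To q'‖ ≤ L * ‖q - q'‖)
    (hTotrans : ∀ (q : Fin d → ℝ) (c : ℝ),
      To (fun i => q i + c) = fun i => To q i + c)
    (finf : (Fin d → ℝ) → ℝ)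
    (hfLip : ∃ L : ℝ, ∀ q q' : Fin d → ℝ, |finf q - finf q'| ≤ L * ‖q - q'‖)
    (α : ℝ)
    (haux : ∀ x₀ : Fin d → ℝ, ∃ y : ℝ → (Fin d → ℝ), ∃ chat : ℝ,
      y 0 = x₀ ∧
      (∀ t : ℝ, HasDerivAt y (fun i => To (y t) i - y t i) t) ∧
      Filter.Tendsto y Filter.atTop (nhds (fun _ => chat)) ∧
      (∀ c : ℝ, AntitoneOn (fun t : ℝ => ‖y t - fun _ => c‖) (Set.Ici 0)))
    (x : ℝ → (Fin d → ℝ))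
    (hx : ∀ t : ℝ, HasDerivAt x (fun i => To (x t) i - x t i - α * finf (x t)) t) :
    ∃ c : ℝ → ℝ, ∃ chat : ℝ,
      (∀ t, HasDerivAt c (α * finf (x t)) t) ∧ c 0 = 0 ∧
      Filter.Tendsto (fun t => x t + c t • (1 : Fin d → ℝ)) Filter.atTop
        (nhds (fun _ => chat)) ∧
      (∀ cc : ℝ, AntitoneOn
        (fun t => ‖(x t + c t • (1 : Fin d → ℝ)) - fun _ => cc‖) (Set.Ici 0)) := by
  obtain ⟨Lf0, hLf0⟩ := hfLip
  -- continuity of finf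
  have hfc : Continuous finf := by
    have : LipschitzWith (max Lf0 0).toNNReal finf := by
      apply LipschitzWith.of_dist_le_mul
      intro q q'
      rw [Real.dist_eq, dist_eq_norm, Real.coe_toNNReal _ (le_max_right _ _)]
      exact (hLf0 q q').trans
        (mul_le_mul_of_nonneg_right (le_max_left _ _) (norm_nonneg _))
    exact this.continuous
  have hxc : Continuous x := by
    have : Differentiable ℝ x := fun t => (hx t).differentiableAt
    exact this.continuous
  have hfx : Continuous fun t => finf (x t) := hfc.comp hxc
  set c : ℝ → ℝ := fun t => α * ∫ s in (0:ℝ)..t, finf (x s) with hcdef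
  have hc : ∀ t, HasDerivAt c (α * finf (x t)) t := by
    intro t
    exact (intervalIntegral.integral_hasDerivAt_right
      (hfx.intervalIntegrable _ _)
      (hfx.stronglyMeasurableAtFilter _ _)
      hfx.continuousAt).const_mul α
  have hc0 : c 0 = 0 := by simp [hcdef]
  set y : ℝ → (Fin d → ℝ) := fun t => x t + c t • (1 : Fin d → ℝ) with hydef
  have hyt : ∀ t, y t = fun i => x t i + c t := by
    intro t
    funext i
    simp [hydef]
  have hy : ∀ t, HasDerivAt y (fun i => To (y t) i - y t i) t := by
    intro t
    have h1 := (hx t).add ((hc t).smul_const (1 : Fin d → ℝ))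
    convert h1 using 1
    · rfl
    · rfl
    · rfl
    · rfl
    funext i
    rw [hyt t, hTotrans (x t) (c t)]
    simp only [Pi.add_apply, Pi.smul_apply, Pi.one_apply, smul_eq_mul, mul_one]
    ring
  -- uniqueness against the auxiliary solution
  obtain ⟨LT0, hLT0⟩ := hToLip
  have hK0 : (0:ℝ) ≤ max LT0 0 + 1 := by positivity
  have hvlip : LipschitzWith (max LT0 0 + 1).toNNReal (fun q : Fin d → ℝ => To q - q) := by
    apply LipschitzWith.of_dist_le_mul
    intro q q'
    rw [dist_eq_norm, Real.coe_toNNReal _ hK0]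
    have heq1 : To q - q - (To q' - q') = (To q - To q') - (q - q') := by abel
    calc ‖To q - q - (To q' - q')‖ = ‖(To q - To q') - (q - q')‖ := by rw [heq1]
      _ ≤ ‖To q - To q'‖ + ‖q - q'‖ := norm_sub_le _ _
      _ ≤ max LT0 0 * ‖q - q'‖ + ‖q - q'‖ := by
          have := (hLT0 q q').trans
            (mul_le_mul_of_nonneg_right (le_max_left LT0 0) (norm_nonneg _))
          linarith
      _ = (max LT0 0 + 1) * ‖q - q'‖ := by ring
  obtain ⟨z, chat, hz0, hz, hzconv, hzmono⟩ := haux (x 0)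
  have hy0 : y 0 = x 0 := by
    rw [hydef]
    simp [hc0]
  have heq : ∀ t, 0 ≤ t → y t = z t := by
    intro t ht
    have := ODE_solution_unique (v := fun _ q => To q - q) (fun _ => hvlip)
      (f := y) (g := z) (a := 0) (b := t)
      (fun s _ => (hy s).continuousAt.continuousWithinAt)
      (fun s _ => (hy s).hasDerivWithinAt)
      (fun s _ => (hz s).continuousAt.continuousWithinAt)
      (fun s _ => (hz s).hasDerivWithinAt)
      (hy0.trans hz0.symm)
    exact this ⟨ht, le_rfl⟩
  refine ⟨c, chat, hc, hc0, ?_, ?_⟩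
  · exact hzconv.congr' ((eventually_ge_atTop 0).mono fun t ht => (heq t ht).symm)
  · intro cc s hs t ht hst
    simp only
    rw [show x s + c s • (1 : Fin d → ℝ) = y s from rfl,
        show x t + c t • (1 : Fin d → ℝ) = y t from rfl, heq s hs, heq t ht]
    exact hzmono cc hs ht hst



/-- In the zero-reward case: every solution of `ẋ = T°(x) − x − ᾱ f∞(x)`
converges to the origin, and the origin is Lyapunov stable. -/
theorem statement12 {d : ℕ} (hd : 1 ≤ d)
    (To : (Fin d → ℝ) → (Fin d → ℝ))
    (hToLip : ∃ L : ℝ, ∀ q q' : Fin d → ℝ, ‖To q - To q'‖ ≤ L * ‖q - q'‖)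
    (hTotrans : ∀ (q : Fin d → ℝ) (c : ℝ),
      To (fun i => q i + c) = fun i => To q i + c)
    (hfix : ∀ q : Fin d → ℝ, To q = q ↔ ∃ c : ℝ, q = fun _ => c)
    (finf : (Fin d → ℝ) → ℝ)
    (hfLip : ∃ L : ℝ, ∀ q q' : Fin d → ℝ, |finf q - finf q'| ≤ L * ‖q - q'‖)
    (hf0 : finf 0 = 0)
    (hmono : ∀ x : Fin d → ℝ, Monotone (fun c : ℝ => finf (fun i => x i + c)))
    (hsm : StrictMono (fun c : ℝ => finf (fun _ => c)))
    (hsurj : Function.Surjective (fun c : ℝ => finf (fun _ => c)))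
    (α : ℝ) (hα : 0 < α)
    (haux : ∀ x₀ : Fin d → ℝ, ∃ y : ℝ → (Fin d → ℝ), ∃ chat : ℝ,
      y 0 = x₀ ∧
      (∀ t : ℝ, HasDerivAt y (fun i => To (y t) i - y t i) t) ∧
      Filter.Tendsto y Filter.atTop (nhds (fun _ => chat)) ∧
      (∀ c : ℝ, AntitoneOn (fun t : ℝ => ‖y t - fun _ => c‖) (Set.Ici 0))) :
    (∀ x : ℝ → (Fin d → ℝ),
      (∀ t : ℝ, HasDerivAt x (fun i => To (x t) i - x t i - α * finf (x t)) t) →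
      Filter.Tendsto x Filter.atTop (nhds 0)) ∧
    (∀ ε : ℝ, 0 < ε → ∃ δ : ℝ, 0 < δ ∧
      ∀ x : ℝ → (Fin d → ℝ),
        (∀ t : ℝ, HasDerivAt x (fun i => To (x t) i - x t i - α * finf (x t)) t) →
        ‖x 0‖ ≤ δ → ∀ t : ℝ, 0 ≤ t → ‖x t‖ ≤ ε) := by
  obtain ⟨Lf0, hLf00⟩ := hfLip
  set Lf := max Lf0 0 with hLfdef
  have hLfpos : (0:ℝ) ≤ Lf := le_max_right _ _
  have hLf : ∀ q q' : Fin d → ℝ, |finf q - finf q'| ≤ Lf * ‖q - q'‖ := fun q q' =>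
    (hLf00 q q').trans (mul_le_mul_of_nonneg_right (le_max_left _ _) (norm_nonneg _))
  have hφ0 : finf (fun _ : Fin d => (0:ℝ)) = 0 := hf0
  haveI : Nonempty (Fin d) := Fin.pos_iff_nonempty.mp hd
  have hLfb : ∀ ρ : ℝ, 0 < ρ → Lf * (ρ / (2 * (Lf + 1))) ≤ ρ / 2 := by
    intro ρ hρ
    have hden : (0:ℝ) < 2 * (Lf + 1) := by linarith
    rw [mul_div_assoc', div_le_div_iff₀ hden two_pos]
    nlinarith
  constructor
  · -- convergence to the origin
    intro x hx
    obtain ⟨c, chat, hc, hc0, hyconv, hymono⟩ :=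
      my_setup To hToLip hTotrans finf ⟨Lf0, hLf00⟩ α haux x hx
    set y : ℝ → (Fin d → ℝ) := fun t => x t + c t • (1 : Fin d → ℝ) with hydef
    have hcconv : Tendsto c atTop (nhds chat) := by
      apply scalar_conv hc chat
      intro ε hε
      set ρ := min (finf (fun _ : Fin d => ε)) (-(finf (fun _ : Fin d => -ε))) with hρdef
      have h1 : finf (fun _ : Fin d => (0:ℝ)) < finf (fun _ : Fin d => ε) := hsm hε
      have h2 : finf (fun _ : Fin d => -ε) < finf (fun _ : Fin d => (0:ℝ)) :=
        hsm (by linarith : -ε < 0)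
      have hρ : 0 < ρ := lt_min (by linarith) (by linarith)
      refine ⟨α * (ρ / 2), by positivity, ?_⟩
      rw [Metric.tendsto_atTop] at hyconv
      obtain ⟨T, hT⟩ := hyconv (ρ / (2 * (Lf + 1))) (by positivity)
      refine ⟨T, fun t ht => ?_⟩
      have hdist : ‖y t - fun _ => chat‖ ≤ ρ / (2 * (Lf + 1)) := by
        have := hT t ht
        rw [dist_eq_norm] at this
        exact this.le
      have hxyt : x t - (fun _ : Fin d => chat - c t) = y t - fun _ => chat := by
        funext i
        simp only [hydef, Pi.sub_apply, Pi.add_apply, Pi.smul_apply, Pi.one_apply,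
          smul_eq_mul, mul_one]
        ring
      have hcomp : |finf (x t) - finf (fun _ : Fin d => chat - c t)| ≤ ρ / 2 := by
        calc |finf (x t) - finf (fun _ : Fin d => chat - c t)|
            ≤ Lf * ‖x t - fun _ => chat - c t‖ := hLf _ _
          _ = Lf * ‖y t - fun _ => chat‖ := by rw [hxyt]
          _ ≤ Lf * (ρ / (2 * (Lf + 1))) := mul_le_mul_of_nonneg_left hdist hLfpos
          _ ≤ ρ / 2 := hLfb ρ hρ
      have habs := abs_le.mp hcomp
      constructor
      · intro hclow
        have hmono2 : finf (fun _ : Fin d => ε) ≤ finf (fun _ : Fin d => chat - c t) :=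
          hsm.monotone (by linarith : ε ≤ chat - c t)
        have hρ1 : ρ ≤ finf (fun _ : Fin d => ε) := by rw [hρdef]; exact min_le_left _ _
        have hfin : ρ / 2 ≤ finf (x t) := by linarith
        exact mul_le_mul_of_nonneg_left hfin hα.le
      · intro hchigh
        have hmono2 : finf (fun _ : Fin d => chat - c t) ≤ finf (fun _ : Fin d => -ε) :=
          hsm.monotone (by linarith : chat - c t ≤ -ε)
        have hρ2 : ρ ≤ -(finf (fun _ : Fin d => -ε)) := by rw [hρdef]; exact min_le_right _ _
        have hfin : finf (x t) ≤ -(ρ / 2) := by linarith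
        have h3 := mul_le_mul_of_nonneg_left hfin hα.le
        have h4 : α * -(ρ / 2) = -(α * (ρ / 2)) := by ring
        linarith
    have hfinal : Tendsto (fun t => y t - c t • (1 : Fin d → ℝ)) atTop
        (nhds ((fun _ => chat) - chat • (1 : Fin d → ℝ))) :=
      hyconv.sub (hcconv.smul_const _)
    have hzero : ((fun _ => chat) - chat • (1 : Fin d → ℝ) : Fin d → ℝ) = 0 := by
      funext i
      simp
    rw [hzero] at hfinal
    refine hfinal.congr fun t => ?_
    simp only [hydef]
    exact add_sub_cancel_right _ _
  · -- Lyapunov stability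
    intro ε hε
    have h1 : finf (fun _ : Fin d => (0:ℝ)) < finf (fun _ : Fin d => ε / 2) :=
      hsm (by linarith : (0:ℝ) < ε / 2)
    have h2 : finf (fun _ : Fin d => -(ε / 2)) < finf (fun _ : Fin d => (0:ℝ)) :=
      hsm (by linarith : -(ε / 2) < 0)
    set ρ := min (finf (fun _ : Fin d => ε / 2)) (-(finf (fun _ : Fin d => -(ε / 2)))) with hρdef
    have hρ : 0 < ρ := lt_min (by linarith) (by linarith)
    set δ := min (ε / 2) (ρ / (2 * (Lf + 1))) with hδdef
    have hδpos : 0 < δ := lt_min (by linarith) (by positivity)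
    refine ⟨δ, hδpos, ?_⟩
    intro x hx hx0
    obtain ⟨c, chat, hc, hc0, hyconv, hymono⟩ :=
      my_setup To hToLip hTotrans finf ⟨Lf0, hLf00⟩ α haux x hx
    set y : ℝ → (Fin d → ℝ) := fun t => x t + c t • (1 : Fin d → ℝ) with hydef
    have hy0 : y 0 = x 0 := by
      rw [hydef]
      simp [hc0]
    have hynorm : ∀ t, 0 ≤ t → ‖y t‖ ≤ δ := by
      intro t ht
      have h3 : ‖y t - fun _ => (0:ℝ)‖ ≤ ‖y 0 - fun _ => (0:ℝ)‖ :=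
        hymono 0 Set.self_mem_Ici (Set.mem_Ici.mpr ht) ht
      simp only [show (fun _ : Fin d => (0:ℝ)) = (0 : Fin d → ℝ) from rfl, sub_zero, hy0] at h3
      exact h3.trans hx0
    have hkey : ∀ t, 0 ≤ t → |finf (x t) - finf (fun _ : Fin d => -(c t))| ≤ ρ / 2 := by
      intro t ht
      have hxyt : x t - (fun _ : Fin d => -(c t)) = y t := by
        funext i
        simp only [hydef, Pi.sub_apply, Pi.add_apply, Pi.smul_apply, Pi.one_apply,
          smul_eq_mul, mul_one]
        ring
      have hδ2 : δ ≤ ρ / (2 * (Lf + 1)) := min_le_right _ _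
      calc |finf (x t) - finf (fun _ : Fin d => -(c t))|
          ≤ Lf * ‖x t - fun _ => -(c t)‖ := hLf _ _
        _ = Lf * ‖y t‖ := by rw [hxyt]
        _ ≤ Lf * (ρ / (2 * (Lf + 1))) :=
            mul_le_mul_of_nonneg_left ((hynorm t ht).trans hδ2) hLfpos
        _ ≤ ρ / 2 := hLfb ρ hρ
    have hup : ∀ t, 0 ≤ t → c t ≤ ε / 2 := by
      apply barrier_le hc
      · intro t ht hct
        have hmono2 : finf (fun _ : Fin d => -(c t)) ≤ finf (fun _ : Fin d => -(ε / 2)) :=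
          hsm.monotone (by linarith : -(c t) ≤ -(ε / 2))
        have hρ2 : ρ ≤ -(finf (fun _ : Fin d => -(ε / 2))) := by
          rw [hρdef]; exact min_le_right _ _
        have habs := abs_le.mp (hkey t ht)
        have hfin : finf (x t) ≤ 0 := by linarith
        calc α * finf (x t) ≤ α * 0 := mul_le_mul_of_nonneg_left hfin hα.le
          _ = 0 := mul_zero α
      · rw [hc0]; linarith
    have hdn : ∀ t, 0 ≤ t → -(ε / 2) ≤ c t := by
      apply barrier_ge hc
      · intro t ht hct
        have hmono2 : finf (fun _ : Fin d => ε / 2) ≤ finf (fun _ : Fin d => -(c t)) :=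
          hsm.monotone (by linarith : ε / 2 ≤ -(c t))
        have hρ1 : ρ ≤ finf (fun _ : Fin d => ε / 2) := by
          rw [hρdef]; exact min_le_left _ _
        have habs := abs_le.mp (hkey t ht)
        have hfin : 0 ≤ finf (x t) := by linarith
        exact mul_nonneg hα.le hfin
      · rw [hc0]; linarith
    intro t ht
    have hxt : x t = y t - c t • (1 : Fin d → ℝ) := by
      rw [hydef]
      exact (add_sub_cancel_right _ _).symm
    have hone : ‖(1 : Fin d → ℝ)‖ = 1 := by
      rw [show (1 : Fin d → ℝ) = fun _ : Fin d => (1:ℝ) from rfl, pi_norm_const]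
      exact norm_one
    have hcabs : |c t| ≤ ε / 2 := abs_le.mpr ⟨by linarith [hdn t ht], hup t ht⟩
    have hδ1 : δ ≤ ε / 2 := min_le_left _ _
    calc ‖x t‖ = ‖y t - c t • (1 : Fin d → ℝ)‖ := by rw [hxt]
      _ ≤ ‖y t‖ + ‖c t • (1 : Fin d → ℝ)‖ := norm_sub_le _ _
      _ = ‖y t‖ + |c t| * ‖(1 : Fin d → ℝ)‖ := by rw [norm_smul, Real.norm_eq_abs]
      _ ≤ δ + (ε / 2) * 1 := by
          rw [hone]
          exact add_le_add (hynorm t ht) (by linarith)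
      _ ≤ ε := by linarith
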